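/- Let u be a word over the alphabet A = A(u) of letters occurring in u, with ι(u) = m (universality index relative to A(u)). Then ζ(u) = m + 1 if and only if there exists a strict suffix x of e(u) such that ι(x·u) = m + 1 and every letter of x occurs in r(x·u); otherwise ζ(u) = m. Here ι(x·u) and r(x·u) are taken relative to the alphabet A(u), and e(u) is the word listing the letters of u in order of their first occurrence in u. -/

import Mathlib

/-- The subword universality index `ι(u)`: the largest `k` such that every word of
length `k` over the alphabet `A` is a subword (subsequence) of `u`. -/
noncomputable def univIndex {A : Type*} (u : List A) : ℕ :=
  sSup {k : ℕ | ∀ w : List A, w.length = k → w.Sublist u}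

/-- The circular subword universality index `ζ(u)`: the maximum of `ι(u')` over all
conjugates `u'` of `u` (equivalently, over all rotations of `u`). -/
noncomputable def circIndex {A : Type*} (u : List A) : ℕ :=
  (Finset.range (u.length + 1)).sup fun i => univIndex (u.drop i ++ u.take i)

open Classical in
/-- The arch-jumping function `α` of a word `w`: `α(i)` is the least `j` such that the
factor `w(i,j)` contains every letter of the alphabet `A`, undefined if no such `j` exists. -/
noncomputable def alphaJump {A : Type*} (w : List A) (i : ℕ) : Option ℕ :=
  if ∃ j, ∀ a : A, a ∈ (w.take j).drop i then
    some (sInf {j : ℕ | ∀ a : A, a ∈ (w.take j).drop i})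
  else none

/-- `αⁿ(i)`: the `n`-fold iteration of the arch-jumping function `α` of `w`, starting
from position `i`; `none` if some intermediate step is undefined. -/
noncomputable def alphaIter {A : Type*} (w : List A) (n i : ℕ) : Option ℕ :=
  (fun o => o.bind (alphaJump w))^[n] (some i)

/-- The number of arches in the arch factorization of `w`:
the largest `n` such that `αⁿ(0)` is defined. -/
noncomputable def numArches {A : Type*} (w : List A) : ℕ :=
  sSup {n : ℕ | (alphaIter w n 0).isSome}

/-- The rest `r(w)` of the arch factorization of `w`: the suffix of `w` remaining after
its arches, i.e. after position `α^m(0)` where `m` is the number of arches. -/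
noncomputable def archRest {A : Type*} (w : List A) : List A :=
  w.drop ((alphaIter w (numArches w) 0).getD 0)

/-- `e(u)`: the word listing the letters of `u` in the order of their first occurrence in `u`. -/
def eWord {A : Type*} [DecidableEq A] (u : List A) : List A :=
  (u.reverse.dedup).reverse

/-!
Cutting `u = p·s`, let `t = ι(s)` and let `z` be a word of length `t + 1` that is not a subword
of `s`. Whenever `z·y` is a subword of `s·p`, the word `y` is a subword of `p`; so a rotation
`s·p` has `ι(s·p) ≤ ι(p) + ι(s) + 1 ≤ ι(p·s) + 1`, and `ζ(u) ∈ {m, m + 1}`.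

If `x` is a strict suffix of `e(u)` as in the statement, write `x·u = v·r` with `v` the arches
and `r` the rest. Since `v` is rich and some letter `b` of `e(u)` is missing from `x`, we get
`v = x·u₁` and `u = u₁·r`; comparing `b·y` with `x·u₁` gives `ι(u₁) ≥ m`, and as the letters of
`x` occur in `r`, the rotation `r·u₁` is `(m + 1)`-universal.

Conversely, let the rotation `s·p` of `u = p·s` be `(m + 1)`-universal. Its greedy arches
cover `ι(s)` arches inside `s`, then one arch `s₂·p₁` straddling the border with `p₁ ≠ []`,
then `m - ι(s)` arches inside the remainder `p₂` of `p`. Take for `x` the letters absent from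
`p₁`, in order of first occurrence: it is a strict suffix of `e(u)` because `e(p₁)` is a prefix
of `e(u)`, its letters lie in `s₂`, and `x·p₁·p₂·s₁` is already `(m + 1)`-universal, so the rest
of `x·u = (x·p₁·p₂·s₁)·s₂` contains `s₂`.
-/

open scoped List

section Lists

variable {A : Type*}

theorem List.Sublist.right_of_not_sublist_left {z y s p : List A} (h : z ++ y <+ s ++ p)
    (hz : ¬ z <+ s) : y <+ p := by
  obtain ⟨l₁, l₂, he, h₁, h₂⟩ := List.sublist_append_iff.mp h
  rcases List.append_eq_append_iff.mp he with ⟨c, rfl, -⟩ | ⟨c, -, rfl⟩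
  · exact absurd ((List.sublist_append_left z c).trans h₁) hz
  · exact (List.sublist_append_right c y).trans h₂

theorem List.Sublist.cons_right_of_notMem {a : A} {z x y : List A} (h : a :: z <+ x ++ y)
    (ha : a ∉ x) : a :: z <+ y := by
  obtain ⟨l₁, l₂, he, h₁, h₂⟩ := List.sublist_append_iff.mp h
  rcases l₁ with _ | ⟨b, l₁⟩
  · rwa [he]
  · rw [List.cons_append, List.cons.injEq] at he
    exact absurd (h₁.subset (he.1 ▸ List.mem_cons_self)) ha

theorem List.drop_take_eq_append {l : List A} {i j k : ℕ} (hij : i ≤ j) (hjk : j ≤ k) :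
    (l.take k).drop i = (l.take j).drop i ++ (l.take k).drop j := by
  simp only [List.drop_take]
  rw [show k - i = (j - i) + (k - j) by omega, List.take_add, List.drop_drop,
    show i + (j - i) = j by omega]

end Lists

section Universality

variable {A : Type*}

-- Stated with `≤` rather than `= k` as in `univIndex`, so that it is downward closed; the two
-- agree over a nonempty alphabet (`isUniversal_iff_forall_length_eq`).
def IsUniversal (k : ℕ) (w : List A) : Prop :=
  ∀ z : List A, z.length ≤ k → z <+ w

theorem isUniversal_zero (w : List A) : IsUniversal 0 w :=
  fun _ hz => List.length_eq_zero_iff.mp (Nat.le_zero.mp hz) ▸ List.nil_sublist w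

theorem IsUniversal.of_le {j k : ℕ} {w : List A} (h : IsUniversal k w) (hjk : j ≤ k) :
    IsUniversal j w :=
  fun z hz => h z (hz.trans hjk)

theorem IsUniversal.sublist {k : ℕ} {v w : List A} (h : IsUniversal k v) (hvw : v <+ w) :
    IsUniversal k w :=
  fun z hz => (h z hz).trans hvw

theorem IsUniversal.append {k l : ℕ} {v w : List A} (hv : IsUniversal k v)
    (hw : IsUniversal l w) : IsUniversal (k + l) (v ++ w) := by
  intro z hz
  rw [← List.take_append_drop k z]
  exact (hv _ (by simp)).append (hw _ (by simp; omega))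

theorem isUniversal_one_iff {w : List A} : IsUniversal 1 w ↔ ∀ a : A, a ∈ w := by
  refine ⟨fun h a => List.singleton_sublist.mp (h [a] le_rfl), fun h z hz => ?_⟩
  rcases z with _ | ⟨a, _ | ⟨b, _⟩⟩
  · exact List.nil_sublist w
  · exact List.singleton_sublist.mpr (h a)
  · simp at hz

theorem IsUniversal.mem {k : ℕ} {w : List A} (h : IsUniversal (k + 1) w) (a : A) : a ∈ w :=
  isUniversal_one_iff.mp (h.of_le (by omega)) a

theorem IsUniversal.of_append_of_notMem {k : ℕ} {x y : List A} {b : A}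
    (h : IsUniversal (k + 1) (x ++ y)) (hb : b ∉ x) : IsUniversal k y :=
  fun z hz => List.Sublist.right_of_not_sublist_left (z := [b]) (h (b :: z) (by simpa))
    (by simpa using hb)

theorem IsUniversal.append_of_subset {k : ℕ} {x y r : List A} {b : A}
    (h : IsUniversal (k + 1) (x ++ y)) (hb : b ∉ x) (hxr : x ⊆ r) :
    IsUniversal (k + 1) (r ++ y) := by
  intro z hz
  rcases z with _ | ⟨a, z⟩
  · exact List.nil_sublist _
  have hzy : z <+ y := h.of_append_of_notMem hb z (by simpa using hz)
  by_cases ha : a ∈ x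
  · exact (List.singleton_sublist.mpr (hxr ha)).append hzy
  · exact ((h (a :: z) hz).cons_right_of_notMem ha).trans (List.sublist_append_right r y)

theorem isUniversal_iff_forall_length_eq [Nonempty A] {k : ℕ} {w : List A} :
    IsUniversal k w ↔ ∀ z : List A, z.length = k → z <+ w := by
  refine ⟨fun h z hz => h z hz.le, fun h z hz => ?_⟩
  have := h (z ++ List.replicate (k - z.length) (Classical.arbitrary A)) (by simp; omega)
  exact (List.sublist_append_left _ _).trans this

theorem le_univIndex_iff [Nonempty A] {k : ℕ} {w : List A} :
    k ≤ univIndex w ↔ IsUniversal k w := by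
  have hset : {k : ℕ | ∀ z : List A, z.length = k → z <+ w} = {k | IsUniversal k w} := by
    ext
    exact isUniversal_iff_forall_length_eq.symm
  have hbdd : BddAbove {k | IsUniversal k w} := ⟨w.length, fun k hk => by
    simpa using (hk (List.replicate k (Classical.arbitrary A)) (by simp)).length_le⟩
  rw [univIndex, hset]
  exact ⟨fun h => (Nat.sSup_mem ⟨0, isUniversal_zero w⟩ hbdd).of_le h, fun h => le_csSup hbdd h⟩

theorem isUniversal_univIndex [Nonempty A] (w : List A) : IsUniversal (univIndex w) w :=
  le_univIndex_iff.mp le_rfl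

theorem univIndex_mono [Nonempty A] {v w : List A} (h : v <+ w) : univIndex v ≤ univIndex w :=
  le_univIndex_iff.mpr ((isUniversal_univIndex v).sublist h)

theorem univIndex_append_le_univIndex_append_add_one (s p : List A) :
    univIndex (s ++ p) ≤ univIndex (p ++ s) + 1 := by
  rcases isEmpty_or_nonempty A with hA | hA
  · simp [Subsingleton.elim s [], Subsingleton.elim p []]
  set t := univIndex s
  by_cases hk : univIndex (s ++ p) ≤ t
  · exact hk.trans ((univIndex_mono (List.sublist_append_right p s)).trans (Nat.le_succ _))
  obtain ⟨z, hz, hzs⟩ : ∃ z : List A, z.length ≤ t + 1 ∧ ¬ z <+ s := by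
    simpa [IsUniversal] using mt (le_univIndex_iff (w := s)).mpr (by omega)
  have hp : IsUniversal (univIndex (s ++ p) - (t + 1)) p := fun y hy =>
    (isUniversal_univIndex (s ++ p) (z ++ y) (by simp; omega)).right_of_not_sublist_left hzs
  have := le_univIndex_iff.mpr (hp.append (isUniversal_univIndex s))
  omega

end Universality

section Rotations

variable {A : Type*}

theorem univIndex_append_le_circIndex (p s : List A) : univIndex (s ++ p) ≤ circIndex (p ++ s) := by
  have := Finset.le_sup (f := fun i => univIndex ((p ++ s).drop i ++ (p ++ s).take i))
    (Finset.mem_range.mpr (show p.length < (p ++ s).length + 1 by simp))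
  simpa [circIndex] using this

theorem univIndex_le_circIndex (u : List A) : univIndex u ≤ circIndex u := by
  simpa using univIndex_append_le_circIndex [] u

theorem circIndex_le_univIndex_add_one (u : List A) : circIndex u ≤ univIndex u + 1 :=
  Finset.sup_le fun i _ => by
    simpa using univIndex_append_le_univIndex_append_add_one (u.drop i) (u.take i)

end Rotations

section Arches

variable {A : Type*} {w : List A}

theorem alphaJump_eq_some_iff {i q : ℕ} :
    alphaJump w i = some q ↔ IsLeast {j | ∀ a : A, a ∈ (w.take j).drop i} q := by
  unfold alphaJump
  split_ifs with h
  · rw [Option.some_inj]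
    exact ⟨fun h' => h' ▸ ⟨Nat.sInf_mem h, fun j hj => Nat.sInf_le hj⟩, fun h' => h'.csInf_eq⟩
  · simp only [false_iff]
    exact fun h' => h ⟨q, h'.1⟩

theorem alphaJump_lt [Nonempty A] {i q : ℕ} (h : alphaJump w i = some q) : i < q := by
  have := List.length_pos_of_mem ((alphaJump_eq_some_iff.mp h).1 (Classical.arbitrary A))
  simp only [List.length_drop, List.length_take] at this
  omega

theorem alphaIter_succ (n i : ℕ) :
    alphaIter w (n + 1) i = (alphaJump w i).bind (alphaIter w n) := by
  rw [alphaIter, Function.iterate_succ_apply]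
  simp only [Option.bind_some]
  cases alphaJump w i with
  | none => exact Function.iterate_fixed rfl n
  | some j => rfl

theorem alphaIter_one (i : ℕ) : alphaIter w 1 i = alphaJump w i := by
  rw [alphaIter_succ]
  cases alphaJump w i <;> rfl

theorem alphaIter_add (a b i : ℕ) :
    alphaIter w (a + b) i = (alphaIter w a i).bind (alphaIter w b) := by
  induction a generalizing i with
  | zero => simp [alphaIter]
  | succ a ih => simp only [Nat.add_right_comm a 1 b, alphaIter_succ, ih, Option.bind_assoc]

theorem le_of_alphaIter_eq_some [Nonempty A] {n i q : ℕ} (h : alphaIter w n i = some q) :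
    i ≤ q := by
  induction n generalizing i with
  | zero => exact (Option.some_inj.mp h).le
  | succ n ih =>
    obtain ⟨j, hj, hjq⟩ := Option.bind_eq_some_iff.mp ((alphaIter_succ n i).symm.trans h)
    exact (alphaJump_lt hj).le.trans (ih hjq)

theorem isUniversal_of_alphaIter_eq_some [Nonempty A] {n i q : ℕ}
    (h : alphaIter w n i = some q) : IsUniversal n ((w.take q).drop i) := by
  induction n generalizing i with
  | zero => exact isUniversal_zero _
  | succ n ih =>
    obtain ⟨j, hj, hjq⟩ := Option.bind_eq_some_iff.mp ((alphaIter_succ n i).symm.trans h)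
    rw [List.drop_take_eq_append (alphaJump_lt hj).le (le_of_alphaIter_eq_some hjq), add_comm]
    exact (isUniversal_one_iff.mpr (alphaJump_eq_some_iff.mp hj).1).append (ih hjq)

theorem exists_alphaIter_eq_some_le [Nonempty A] {n i e : ℕ} (hie : i ≤ e)
    (h : IsUniversal n ((w.take e).drop i)) : ∃ q, alphaIter w n i = some q ∧ q ≤ e := by
  induction n generalizing i with
  | zero => exact ⟨i, rfl, hie⟩
  | succ n ih =>
    have hrich : e ∈ {j | ∀ a : A, a ∈ (w.take j).drop i} := h.mem
    obtain ⟨j, hj⟩ : ∃ j, alphaJump w i = some j :=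
      ⟨_, alphaJump_eq_some_iff.mpr ⟨Nat.sInf_mem ⟨e, hrich⟩, fun _ hk => Nat.sInf_le hk⟩⟩
    have hjmin := alphaJump_eq_some_iff.mp hj
    have hje : j ≤ e := hjmin.2 hrich
    have hij := alphaJump_lt hj
    obtain ⟨a, ha⟩ : ∃ a, a ∉ (w.take (j - 1)).drop i := by
      by_contra! hc
      have := hjmin.2 hc
      omega
    have hrest : IsUniversal n ((w.take e).drop j) := by
      -- any embedding of `a :: z` into `w[i, e)` matches `a` at position `j - 1` or later
      intro z hz
      have haz := h (a :: z) (by simp; omega)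
      rw [List.drop_take_eq_append (by omega : i ≤ j - 1) (by omega : j - 1 ≤ e)] at haz
      simpa [List.tail_drop, Nat.sub_add_cancel (by omega : 1 ≤ j)] using
        (haz.cons_right_of_notMem ha).tail
    obtain ⟨q, hq, hqe⟩ := ih hje hrest
    exact ⟨q, by rw [alphaIter_succ, hj, Option.bind_some, hq], hqe⟩

theorem alphaIter_isSome_iff [Nonempty A] {n : ℕ} :
    (alphaIter w n 0).isSome ↔ IsUniversal n w := by
  constructor
  · intro h
    obtain ⟨q, hq⟩ := Option.isSome_iff_exists.mp h
    exact (isUniversal_of_alphaIter_eq_some hq).sublist (by simpa using List.take_sublist q w)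
  · intro h
    obtain ⟨q, hq, -⟩ :=
      exists_alphaIter_eq_some_le (w := w) (e := w.length) (Nat.zero_le _) (by simpa)
    simp [hq]

theorem numArches_eq_univIndex [Nonempty A] : numArches w = univIndex w := by
  have : {n | (alphaIter w n 0).isSome} = Set.Iic (univIndex w) := by
    ext n
    exact alphaIter_isSome_iff.trans le_univIndex_iff.symm
  rw [numArches, this, csSup_Iic]

theorem exists_eq_append_archRest [Nonempty A] (w : List A) :
    ∃ v, w = v ++ archRest w ∧ IsUniversal (univIndex w) v := by
  obtain ⟨q, hq⟩ :=
    Option.isSome_iff_exists.mp (alphaIter_isSome_iff.mpr (isUniversal_univIndex w))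
  refine ⟨w.take q, ?_, by simpa using isUniversal_of_alphaIter_eq_some hq⟩
  rw [archRest, numArches_eq_univIndex, hq, Option.getD_some, List.take_append_drop]

theorem suffix_archRest [Nonempty A] {v v' : List A}
    (h : IsUniversal (univIndex (v ++ v')) v) : v' <:+ archRest (v ++ v') := by
  obtain ⟨q, hq, hqv⟩ :=
    exists_alphaIter_eq_some_le (w := v ++ v') (e := v.length) (Nat.zero_le _) (by simpa)
  rw [archRest, numArches_eq_univIndex, hq, Option.getD_some]
  have : ((v ++ v').drop q).drop (v.length - q) = v' := by
    rw [List.drop_drop, Nat.add_sub_cancel' hqv, List.drop_left]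
  simpa only [this] using List.drop_suffix (v.length - q) ((v ++ v').drop q)

theorem exists_straddling_arch [Nonempty A] {s p : List A} {t m : ℕ}
    (hs : IsUniversal t s) (hs' : ¬ IsUniversal (t + 1) s) (htm : t ≤ m)
    (hsp : IsUniversal (m + 1) (s ++ p)) :
    ∃ s₁ s₂ p₁ p₂, s = s₁ ++ s₂ ∧ p = p₁ ++ p₂ ∧ p₁ ≠ [] ∧ IsUniversal t s₁ ∧
      (∀ a : A, a ∈ s₂ ++ p₁) ∧ IsUniversal (m - t) p₂ := by
  rw [show m + 1 = t + 1 + (m - t) by omega, ← alphaIter_isSome_iff,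
    Option.isSome_iff_exists] at hsp
  obtain ⟨Q, hQ⟩ := hsp
  obtain ⟨j, htj, hjQ⟩ := Option.bind_eq_some_iff.mp ((alphaIter_add _ _ 0).symm.trans hQ)
  obtain ⟨i, hti, hij⟩ := Option.bind_eq_some_iff.mp ((alphaIter_add _ _ 0).symm.trans htj)
  rw [alphaIter_one] at hij
  -- `i` and `j` are the ends of the `t`-th and `(t + 1)`-st greedy arches of `s ++ p`
  obtain ⟨i', hti', his⟩ := exists_alphaIter_eq_some_le (w := s ++ p) (e := s.length)
    (Nat.zero_le _) (by simpa)
  obtain rfl : i = i' := Option.some_inj.mp (hti.symm.trans hti')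
  have hsj : s.length < j := by
    by_contra! hjs
    refine hs' ((isUniversal_of_alphaIter_eq_some htj).sublist ?_)
    simpa [List.take_append_of_le_length hjs] using List.take_sublist j s
  have hrich : ∀ a : A, a ∈ s.drop i ++ p.take (j - s.length) := by
    simpa [List.take_append, List.take_of_length_le hsj.le, List.drop_append_of_le_length his]
      using (alphaJump_eq_some_iff.mp hij).1
  have hs₁ : IsUniversal t (s.take i) := by
    simpa [List.take_append_of_le_length his] using isUniversal_of_alphaIter_eq_some hti
  refine ⟨s.take i, s.drop i, p.take (j - s.length), p.drop (j - s.length),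
    (List.take_append_drop _ _).symm, (List.take_append_drop _ _).symm, ?_, hs₁, hrich, ?_⟩
  · intro hp₁
    rw [hp₁, List.append_nil] at hrich
    exact hs' (List.take_append_drop i s ▸ hs₁.append (isUniversal_one_iff.mpr hrich))
  · refine (isUniversal_of_alphaIter_eq_some hjQ).sublist ?_
    simpa [List.drop_append, List.drop_eq_nil_of_le hsj.le] using
      (List.take_sublist Q (s ++ p)).drop j

end Arches

section EWord

variable {A : Type*} [DecidableEq A]

theorem mem_eWord {a : A} {u : List A} : a ∈ eWord u ↔ a ∈ u := by
  simp [eWord]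

theorem nodup_eWord (u : List A) : (eWord u).Nodup :=
  List.nodup_reverse.mpr (List.nodup_dedup _)

theorem eWord_prefix_eWord_append (p s : List A) : eWord p <+: eWord (p ++ s) := by
  rw [eWord, eWord, ← List.reverse_suffix, List.reverse_reverse, List.reverse_reverse,
    List.reverse_append, List.dedup_append]
  exact List.suffix_union_right _ _

end EWord

section CircIndex

variable {A : Type*} [DecidableEq A]

theorem succ_le_circIndex {u x : List A} {m : ℕ} (hsuf : x <:+ eWord u) (hne : x ≠ eWord u)
    (hxu : univIndex (x ++ u) = m + 1) (hrest : ∀ a ∈ x, a ∈ archRest (x ++ u)) :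
    m + 1 ≤ circIndex u := by
  obtain ⟨e, he⟩ := hsuf
  obtain ⟨b, e, rfl⟩ := List.exists_cons_of_ne_nil (show e ≠ [] by rintro rfl; exact hne he)
  have hb : b ∉ x := List.disjoint_of_nodup_append (he ▸ nodup_eWord u) List.mem_cons_self
  have : Nonempty A := ⟨b⟩
  obtain ⟨v, hw, hv⟩ := exists_eq_append_archRest (x ++ u)
  rw [hxu] at hv
  generalize archRest (x ++ u) = r at hw hrest
  rcases List.append_eq_append_iff.mp hw with ⟨u₁, rfl, rfl⟩ | ⟨c, rfl, -⟩
  · calc m + 1 ≤ univIndex (r ++ u₁) := le_univIndex_iff.mpr (hv.append_of_subset hb hrest)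
      _ ≤ circIndex (u₁ ++ r) := univIndex_append_le_circIndex u₁ r
  · exact absurd (List.mem_append_left c (hv.mem b)) hb

theorem exists_suffix_of_straddle [Nonempty A] {u p₁ p₂ s₁ s₂ : List A} {t m : ℕ}
    (hA : ∀ a : A, a ∈ u) (hm : univIndex u = m) (hu : u = (p₁ ++ p₂) ++ (s₁ ++ s₂))
    (htm : t ≤ m) (hp₁ : p₁ ≠ []) (hs₁ : IsUniversal t s₁) (hrich : ∀ a : A, a ∈ s₂ ++ p₁)
    (hp₂ : IsUniversal (m - t) p₂) :
    ∃ x : List A, x <:+ eWord u ∧ x ≠ eWord u ∧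
      univIndex (x ++ u) = m + 1 ∧ ∀ a ∈ x, a ∈ archRest (x ++ u) := by
  obtain ⟨x, hx⟩ := eWord_prefix_eWord_append p₁ (p₂ ++ (s₁ ++ s₂))
  rw [← List.append_assoc, ← hu] at hx
  have hxp₁ : ∀ a, a ∉ p₁ → a ∈ x := fun a hap => by
    simpa [← hx, mem_eWord, hap] using mem_eWord.mpr (hA a)
  have hxp₁' : ∀ a ∈ x, a ∉ p₁ := fun a hax hap =>
    List.disjoint_of_nodup_append (hx ▸ nodup_eWord u) (mem_eWord.mpr hap) hax
  obtain ⟨c, p₁', rfl⟩ := List.exists_cons_of_ne_nil hp₁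
  have hc : c ∉ x := fun hcx => hxp₁' c hcx List.mem_cons_self
  have hv : IsUniversal (m + 1) (x ++ c :: p₁' ++ p₂ ++ s₁) := by
    have hxp : IsUniversal 1 (x ++ c :: p₁') := isUniversal_one_iff.mpr fun a => by
      by_cases ha : a ∈ c :: p₁'
      · exact List.mem_append_right x ha
      · exact List.mem_append_left _ (hxp₁ a ha)
    rw [show m + 1 = 1 + (m - t) + t by omega]
    exact (hxp.append hp₂).append hs₁
  have hxv : x ++ u = (x ++ c :: p₁' ++ p₂ ++ s₁) ++ s₂ := by simp [hu]
  have hxu : univIndex (x ++ u) = m + 1 := by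
    refine le_antisymm (not_lt.mp fun h => ?_)
      (le_univIndex_iff.mpr (hxv ▸ hv.sublist (List.sublist_append_left _ s₂)))
    have := le_univIndex_iff.mpr
      ((le_univIndex_iff.mp (Nat.succ_le_of_lt h)).of_append_of_notMem hc)
    omega
  refine ⟨x, ⟨_, hx⟩, fun h => hc (h ▸ mem_eWord.mpr (hA c)), hxu, fun a ha => ?_⟩
  have has₂ : a ∈ s₂ := by
    simpa [hxp₁' a ha] using hrich a
  rw [hxv] at hxu ⊢
  exact (suffix_archRest (hxu ▸ hv)).mem has₂

theorem exists_suffix_of_circIndex_eq {u : List A} {m : ℕ} (hA : ∀ a : A, a ∈ u)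
    (hm : univIndex u = m) (hz : circIndex u = m + 1) :
    ∃ x : List A, x <:+ eWord u ∧ x ≠ eWord u ∧
      univIndex (x ++ u) = m + 1 ∧ ∀ a ∈ x, a ∈ archRest (x ++ u) := by
  have : Nonempty A := by
    rcases u with _ | ⟨c, _⟩
    · simp [circIndex, hm] at hz
    · exact ⟨c⟩
  obtain ⟨i, -, hi⟩ := Finset.exists_mem_eq_sup (Finset.range (u.length + 1)) ⟨0, by simp⟩
    fun i => univIndex (u.drop i ++ u.take i)
  obtain ⟨p, s, hu, hsp⟩ : ∃ p s, u = p ++ s ∧ univIndex (s ++ p) = m + 1 :=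
    ⟨_, _, (List.take_append_drop i u).symm, by rw [← hz, circIndex, hi]⟩
  have hsm : univIndex s ≤ m := hm ▸ hu ▸ univIndex_mono (List.sublist_append_right p s)
  obtain ⟨s₁, s₂, p₁, p₂, rfl, rfl, hp₁, hs₁, hrich, hp₂⟩ := exists_straddling_arch
    (isUniversal_univIndex s) (fun h => by have := le_univIndex_iff.mpr h; omega) hsm
    (le_univIndex_iff.mp hsp.ge)
  exact exists_suffix_of_straddle hA hm hu hsm hp₁ hs₁ hrich hp₂

end CircIndex

theorem circIndex_from_signature_general {A : Type*} [DecidableEq A]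
    (u : List A) (m : ℕ) (hA : ∀ a : A, a ∈ u) (hm : univIndex u = m) :
    (circIndex u = m + 1 ↔
      ∃ x : List A, x <:+ eWord u ∧ x ≠ eWord u ∧
        univIndex (x ++ u) = m + 1 ∧ ∀ a ∈ x, a ∈ archRest (x ++ u)) ∧
    ((¬ ∃ x : List A, x <:+ eWord u ∧ x ≠ eWord u ∧
        univIndex (x ++ u) = m + 1 ∧ ∀ a ∈ x, a ∈ archRest (x ++ u)) →
      circIndex u = m) := by
  have hle : circIndex u ≤ m + 1 := hm ▸ circIndex_le_univIndex_add_one u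
  have hge : m ≤ circIndex u := hm ▸ univIndex_le_circIndex u
  have key : circIndex u = m + 1 ↔ ∃ x : List A, x <:+ eWord u ∧ x ≠ eWord u ∧
      univIndex (x ++ u) = m + 1 ∧ ∀ a ∈ x, a ∈ archRest (x ++ u) :=
    ⟨exists_suffix_of_circIndex_eq hA hm, fun ⟨_, hsuf, hne, hxu, hrest⟩ =>
      le_antisymm hle (succ_le_circIndex hsuf hne hxu hrest)⟩
  exact ⟨key, fun h => by have := mt key.mp h; omega⟩

/-- Let `u` be a word over its own alphabet `A = A(u)` (every letter of `A` occurs in `u`)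
with `ι(u) = m`. Then `ζ(u) = m + 1` iff there is a strict suffix `x` of `e(u)` with
`ι(x·u) = m + 1` and every letter of `x` occurring in `r(x·u)`; otherwise `ζ(u) = m`. -/
theorem circIndex_from_signature {A : Type*} [Fintype A] [DecidableEq A]
    (u : List A) (m : ℕ) (hA : ∀ a : A, a ∈ u) (hm : univIndex u = m) :
    (circIndex u = m + 1 ↔
      ∃ x : List A, x <:+ eWord u ∧ x ≠ eWord u ∧
        univIndex (x ++ u) = m + 1 ∧ ∀ a ∈ x, a ∈ archRest (x ++ u)) ∧
    ((¬ ∃ x : List A, x <:+ eWord u ∧ x ≠ eWord u ∧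
        univIndex (x ++ u) = m + 1 ∧ ∀ a ∈ x, a ∈ archRest (x ++ u)) →
      circIndex u = m) :=
  circIndex_from_signature_general u m hA hm
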